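/- arXiv:2108.12935 — 8 statements merged into one kernel-verified Lean document; each statement's English description precedes it below -/
import Mathlib

section
/- Let (S, *, ≤) be a partially ordered semigroup in which every non-empty subset has an infimum, and let (X, ⪯) be a totally ordered set. Define an operation ⋆ on the set S^X of X-indexed families by declaring ((a_x) ⋆ (b_x))_x = inf{ a_{x₁} * b_{x₂} : (x₁,x₂) satisfies x ⪯ x₁ = x₂, or x₂ ⪯ x = x₁, or x₁ ⪯ x₂ = x }. Then ⋆ is associative, i.e. (S^X, ⋆) is a semigroup. -/
section CndLemmas

variable {X : Type*} [LinearOrder X]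

/-- The pairing condition used in the definition of `⋆`. -/
def Cnd (x a b : X) : Prop :=
  (x ≤ a ∧ a = b) ∨ (b ≤ x ∧ x = a) ∨ (a ≤ b ∧ b = x)

lemma cnd_refl (x : X) : Cnd x x x := Or.inl ⟨le_refl x, rfl⟩

lemma cnd_swap {x a b : X} (h : Cnd x a b) : Cnd x b a := by
  rcases h with ⟨h1, rfl⟩ | ⟨h1, rfl⟩ | ⟨h1, rfl⟩
  · exact Or.inl ⟨h1, rfl⟩
  · exact Or.inr (Or.inr ⟨h1, rfl⟩)
  · exact Or.inr (Or.inl ⟨h1, rfl⟩)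

/-- "Two of the four elements are equal and dominate the other two." -/
def Dd (x z u v : X) : Prop :=
  (x = z ∧ u ≤ x ∧ v ≤ x) ∨ (x = u ∧ z ≤ x ∧ v ≤ x) ∨ (x = v ∧ z ≤ x ∧ u ≤ x) ∨
  (z = u ∧ x ≤ z ∧ v ≤ z) ∨ (z = v ∧ x ≤ z ∧ u ≤ z) ∨ (u = v ∧ x ≤ u ∧ z ≤ u)

lemma toD {x z u v y : X} (h1 : Cnd x y z) (h2 : Cnd y u v) : Dd x z u v := by
  rcases h1 with ⟨a1, e1⟩ | ⟨a1, e1⟩ | ⟨a1, e1⟩ <;>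
    rcases h2 with ⟨b1, e2⟩ | ⟨b1, e2⟩ | ⟨b1, e2⟩
  -- c1: x ≤ y, y = z
  · exact Or.inr (Or.inr (Or.inr (Or.inr (Or.inr
      ⟨e2, a1.trans b1, e1 ▸ b1⟩))))
  · exact Or.inr (Or.inr (Or.inr (Or.inl
      ⟨e1.symm.trans e2, e1 ▸ a1, e1 ▸ b1⟩)))
  · exact Or.inr (Or.inr (Or.inr (Or.inr (Or.inl
      ⟨e1.symm.trans e2.symm, e1 ▸ a1, (e2.trans e1) ▸ b1⟩))))
  -- c2: z ≤ x, x = y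
  · exact Or.inr (Or.inr (Or.inr (Or.inr (Or.inr
      ⟨e2, e1.symm ▸ b1, a1.trans (e1.symm ▸ b1)⟩))))
  · exact Or.inr (Or.inl ⟨e1.trans e2, a1, e1.symm ▸ b1⟩)
  · exact Or.inr (Or.inr (Or.inl ⟨e1.trans e2.symm, a1, (e2.trans e1.symm) ▸ b1⟩))
  -- c3: y ≤ z, z = x
  · rcases le_total u x with h | h
    · exact Or.inl ⟨e1.symm, h, e2 ▸ h⟩
    · exact Or.inr (Or.inr (Or.inr (Or.inr (Or.inr ⟨e2, h, e1.symm ▸ h⟩))))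
  · exact Or.inl ⟨e1.symm, e1 ▸ (e2 ▸ a1), e1 ▸ (b1.trans a1)⟩
  · exact Or.inl ⟨e1.symm, e1 ▸ ((e2 ▸ b1).trans a1), e1 ▸ (e2.le.trans a1)⟩

lemma fromD {x z u v : X} (h : Dd x z u v) : ∃ y, Cnd x y z ∧ Cnd y u v := by
  rcases h with ⟨e0, h1, h2⟩ | ⟨e0, h1, h2⟩ | ⟨e0, h1, h2⟩ |
    ⟨e0, h1, h2⟩ | ⟨e0, h1, h2⟩ | ⟨e0, h1, h2⟩
  · rcases le_total u v with h | h
    · exact ⟨v, Or.inr (Or.inr ⟨e0 ▸ h2, e0.symm⟩), Or.inr (Or.inr ⟨h, rfl⟩)⟩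
    · exact ⟨u, Or.inr (Or.inr ⟨e0 ▸ h1, e0.symm⟩), Or.inr (Or.inl ⟨h, rfl⟩)⟩
  · exact ⟨x, Or.inr (Or.inl ⟨h1, rfl⟩), Or.inr (Or.inl ⟨h2, e0⟩)⟩
  · exact ⟨x, Or.inr (Or.inl ⟨h1, rfl⟩), Or.inr (Or.inr ⟨e0 ▸ h2, e0.symm⟩)⟩
  · exact ⟨z, Or.inl ⟨h1, rfl⟩, Or.inr (Or.inl ⟨h2, e0⟩)⟩
  · exact ⟨z, Or.inl ⟨h1, rfl⟩, Or.inr (Or.inr ⟨e0 ▸ h2, e0.symm⟩)⟩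
  · rcases le_total x z with h | h
    · exact ⟨z, Or.inl ⟨h, rfl⟩, Or.inl ⟨h2, e0⟩⟩
    · exact ⟨x, Or.inr (Or.inl ⟨h, rfl⟩), Or.inl ⟨h1, e0⟩⟩

lemma dperm {x z u v : X} (h : Dd x z u v) : Dd x u v z := by
  rcases h with ⟨e0, h1, h2⟩ | ⟨e0, h1, h2⟩ | ⟨e0, h1, h2⟩ |
    ⟨e0, h1, h2⟩ | ⟨e0, h1, h2⟩ | ⟨e0, h1, h2⟩
  · exact Or.inr (Or.inr (Or.inl ⟨e0, h1, h2⟩))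
  · exact Or.inl ⟨e0, h2, h1⟩
  · exact Or.inr (Or.inl ⟨e0, h2, h1⟩)
  · exact Or.inr (Or.inr (Or.inr (Or.inr (Or.inl ⟨e0.symm, e0 ▸ h1, e0 ▸ h2⟩))))
  · exact Or.inr (Or.inr (Or.inr (Or.inr (Or.inr ⟨e0.symm, e0 ▸ h1, e0 ▸ h2⟩))))
  · exact Or.inr (Or.inr (Or.inr (Or.inl ⟨e0, h1, h2⟩)))

lemma main_iff {x z u v : X} :
    (∃ y, Cnd x y z ∧ Cnd y u v) ↔ (∃ y, Cnd x u y ∧ Cnd y v z) := by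
  constructor
  · rintro ⟨y, h1, h2⟩
    obtain ⟨y', h1', h2'⟩ := fromD (dperm (toD h1 h2))
    exact ⟨y', cnd_swap h1', h2'⟩
  · rintro ⟨y, h1, h2⟩
    exact fromD (dperm (dperm (toD (cnd_swap h1) h2)))

end CndLemmas

/-- Associativity of the operation `⋆` on `X`-indexed families of elements of a
partially ordered semigroup `S` (with infima of non-empty sets, compatible with
multiplication), where `X` is totally ordered. -/
theorem stmt0 {S : Type*} [Semigroup S] [PartialOrder S] [InfSet S]
    (inf_isGLB : ∀ T : Set S, T.Nonempty → IsGLB T (sInf T))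
    (mul_sInf : ∀ (a : S) (T : Set S), T.Nonempty → a * sInf T = sInf ((a * ·) '' T))
    (sInf_mul : ∀ (a : S) (T : Set S), T.Nonempty → sInf T * a = sInf ((· * a) '' T))
    {X : Type*} [LinearOrder X]
    (star : (X → S) → (X → S) → (X → S))
    (hstar : ∀ a b : X → S, ∀ x : X, star a b x =
      sInf {c : S | ∃ x₁ x₂ : X,
        ((x ≤ x₁ ∧ x₁ = x₂) ∨ (x₂ ≤ x ∧ x = x₁) ∨ (x₁ ≤ x₂ ∧ x₂ = x)) ∧
        c = a x₁ * b x₂}) :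
    ∀ a b c : X → S, star (star a b) c = star a (star b c) := by
  -- rewrite hstar in terms of Cnd
  have hstar' : ∀ a b : X → S, ∀ x : X, star a b x =
      sInf {s : S | ∃ x₁ x₂ : X, Cnd x x₁ x₂ ∧ s = a x₁ * b x₂} := hstar
  have hne : ∀ (f g : X → S) (y : X),
      {s : S | ∃ u v, Cnd y u v ∧ s = f u * g v}.Nonempty :=
    fun f g y => ⟨f y * g y, y, y, cnd_refl y, rfl⟩
  have key : ∀ (T₁ T₂ : Set S), T₁.Nonempty → T₂.Nonempty →
      (∀ l, (∀ t ∈ T₁, l ≤ t) ↔ (∀ t ∈ T₂, l ≤ t)) → sInf T₁ = sInf T₂ := by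
    intro T₁ T₂ h1 h2 h
    have g1 := inf_isGLB T₁ h1
    have g2 := inf_isGLB T₂ h2
    exact le_antisymm (g2.2 fun t ht => (h (sInf T₁)).1 (fun t ht => g1.1 ht) t ht)
      (g1.2 fun t ht => (h (sInf T₂)).2 (fun t ht => g2.1 ht) t ht)
  intro a b c
  funext x
  set P : Set S :=
    {s | ∃ u v z, (∃ y, Cnd x y z ∧ Cnd y u v) ∧ s = a u * b v * c z} with hP
  have hPne : P.Nonempty :=
    ⟨a x * b x * c x, x, x, x, ⟨x, cnd_refl x, cnd_refl x⟩, rfl⟩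
  have claim1 : star (star a b) c x = sInf P := by
    rw [hstar']
    apply key
    · exact ⟨star a b x * c x, x, x, cnd_refl x, rfl⟩
    · exact hPne
    · intro l
      constructor
      · rintro H t ⟨u, v, z, ⟨y, hxy, hyuv⟩, rfl⟩
        have h1 : l ≤ star a b y * c z := H _ ⟨y, z, hxy, rfl⟩
        have h2 : star a b y * c z ≤ a u * b v * c z := by
          rw [hstar', sInf_mul _ _ (hne a b y)]
          exact (inf_isGLB _ ((hne a b y).image _)).1
            ⟨a u * b v, ⟨u, v, hyuv, rfl⟩, rfl⟩
        exact h1.trans h2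
      · rintro H t ⟨y, z, hxy, rfl⟩
        rw [hstar', sInf_mul _ _ (hne a b y)]
        apply (inf_isGLB _ ((hne a b y).image _)).2
        rintro t ⟨s, ⟨u, v, hyuv, rfl⟩, rfl⟩
        exact H _ ⟨u, v, z, ⟨y, hxy, hyuv⟩, rfl⟩
  have claim2 : star a (star b c) x = sInf P := by
    rw [hstar']
    apply key
    · exact ⟨a x * star b c x, x, x, cnd_refl x, rfl⟩
    · exact hPne
    · intro l
      constructor
      · rintro H t ⟨u, v, z, ⟨y, hxy, hyuv⟩, rfl⟩
        obtain ⟨y', hxy', hyuv'⟩ := main_iff.mp ⟨y, hxy, hyuv⟩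
        have h1 : l ≤ a u * star b c y' := H _ ⟨u, y', hxy', rfl⟩
        have h2 : a u * star b c y' ≤ a u * b v * c z := by
          rw [hstar', mul_sInf _ _ (hne b c y'), mul_assoc]
          exact (inf_isGLB _ ((hne b c y').image _)).1
            ⟨b v * c z, ⟨v, z, hyuv', rfl⟩, rfl⟩
        exact h1.trans h2
      · rintro H t ⟨u, y, hxy, rfl⟩
        rw [hstar', mul_sInf _ _ (hne b c y)]
        apply (inf_isGLB _ ((hne b c y).image _)).2
        rintro t ⟨s, ⟨v, z, hyvz, rfl⟩, rfl⟩
        have := H _ ⟨u, v, z, main_iff.mpr ⟨y, hxy, hyvz⟩, rfl⟩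
        simpa [mul_assoc] using this
  rw [claim1, claim2]
end

section
/- Let (X, ⪯) be a totally ordered set. For x ∈ X, write x↑ for the set of pairs (x₁,x₂) with x ⪯ x₁ = x₂, or x₂ ⪯ x = x₁, or x₁ ⪯ x₂ = x, and write x↑↑ for the set of triples (x₁,x₂,x₃) such that for some x₂₃ ∈ X one has (x₁,x₂₃) ∈ x↑ and (x₂,x₃) ∈ x₂₃↑. Call a triple redundantly maximised if at least two of its components are maximal among the three (i.e. x₁ ⪯ x₂ = x₃, or x₃ ⪯ x₁ = x₂, or x₂ ⪯ x₁ = x₃). Then x↑↑ consists precisely of the triples (x₁,x₂,x₃) such that x ⪯ max{x₁,x₂,x₃}, and moreover x = max{x₁,x₂,x₃} or (x₁,x₂,x₃) is redundantly maximised. In particular, x↑↑ is stable under the involution (x₁,x₂,x₃) ↦ (x₃,x₂,x₁). -/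
/-- `(x₁, x₂)` belongs to `x↑`. -/
def up {X : Type*} [LinearOrder X] (x x₁ x₂ : X) : Prop :=
  (x ≤ x₁ ∧ x₁ = x₂) ∨ (x₂ ≤ x ∧ x = x₁) ∨ (x₁ ≤ x₂ ∧ x₂ = x)

/-- A triple is redundantly maximised if at least two of its components are maximal. -/
def redMax {X : Type*} [LinearOrder X] (x₁ x₂ x₃ : X) : Prop :=
  (x₁ ≤ x₂ ∧ x₂ = x₃) ∨ (x₃ ≤ x₁ ∧ x₁ = x₂) ∨ (x₂ ≤ x₁ ∧ x₁ = x₃)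

private lemma redMax_swap {X : Type*} [LinearOrder X] {a b c : X}
    (h : redMax a b c) : redMax c b a := by
  rcases h with ⟨h1, h2⟩ | ⟨h1, h2⟩ | ⟨h1, h2⟩
  · exact Or.inr (Or.inl ⟨h2 ▸ h1, h2.symm⟩)
  · exact Or.inl ⟨h2 ▸ h1, h2.symm⟩
  · exact Or.inr (Or.inr ⟨h2 ▸ h1, h2.symm⟩)

private lemma key {X : Type*} [LinearOrder X] (x a b c : X) :
    (∃ y : X, up x a y ∧ up y b c) ↔
      (x ≤ max a (max b c) ∧ (x = max a (max b c) ∨ redMax a b c)) := by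
  constructor
  · rintro ⟨y, hy1, hy2⟩
    rcases hy1 with ⟨h1, rfl⟩ | ⟨h1, rfl⟩ | ⟨h1, rfl⟩ <;>
      rcases hy2 with ⟨h2, h2'⟩ | ⟨h2, h2'⟩ | ⟨h2, h2'⟩
    -- Case A: h1 : x ≤ a, y = a
    · exact ⟨h1.trans (le_max_left _ _), Or.inr (Or.inl ⟨h2, h2'⟩)⟩
    · exact ⟨h1.trans (le_max_left _ _), Or.inr (Or.inr (Or.inl ⟨h2, h2'⟩))⟩
    · exact ⟨h1.trans (le_max_left _ _),
        Or.inr (Or.inr (Or.inr ⟨h2' ▸ h2, h2'.symm⟩))⟩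
    -- Case B: h1 : y ≤ x, a replaced by x
    · rcases le_total b x with hbx | hxb
      · exact ⟨le_max_left _ _,
          Or.inl (max_eq_left (max_le hbx (h2' ▸ hbx))).symm⟩
      · exact ⟨le_max_left _ _, Or.inr (Or.inl ⟨hxb, h2'⟩)⟩
    · exact ⟨le_max_left _ _,
        Or.inl (max_eq_left (max_le (h2' ▸ h1) (h2.trans h1))).symm⟩
    · have hcx : c ≤ x := h2'.symm ▸ h1
      exact ⟨le_max_left _ _,
        Or.inl (max_eq_left (max_le (h2.trans hcx) hcx)).symm⟩
    -- Case C: h1 : a ≤ y, y = x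
    · exact ⟨h2.trans (le_max_of_le_right (le_max_left _ _)),
        Or.inr (Or.inl ⟨h1.trans h2, h2'⟩)⟩
    · subst h2'
      refine ⟨le_max_of_le_right (le_max_left _ _), Or.inl ?_⟩
      rw [max_eq_left h2, max_eq_right h1]
    · subst h2'
      refine ⟨le_max_of_le_right (le_max_right _ _), Or.inl ?_⟩
      rw [max_eq_right h2, max_eq_right h1]
  · rintro ⟨hle, hM | hred⟩
    · refine ⟨max b c, ?_, ?_⟩
      · rcases le_total (max b c) a with h | h
        · have hx : x = a := by rw [hM, max_eq_left h]
          exact Or.inr (Or.inl ⟨h.trans hx.ge, hx⟩)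
        · have hy : max b c = x := by rw [hM, max_eq_right h]
          exact Or.inr (Or.inr ⟨h, hy⟩)
      · rcases le_total b c with h | h
        · exact Or.inr (Or.inr ⟨h, (max_eq_right h).symm ▸ rfl⟩)
        · exact Or.inr (Or.inl ⟨le_max_right b c, max_eq_left h⟩)
    · rcases hred with ⟨h1, h2⟩ | ⟨h1, h2⟩ | ⟨h1, h2⟩
      · rcases le_total a x with hax | hxa
        · refine ⟨x, Or.inr (Or.inr ⟨hax, rfl⟩), Or.inl ⟨?_, h2⟩⟩
          have hmb : max a (max b c) = b := by
            rw [← h2, max_self, max_eq_right h1]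
          exact hmb ▸ hle
        · exact ⟨a, Or.inl ⟨hxa, rfl⟩, Or.inl ⟨h1, h2⟩⟩
      · have hxa : x ≤ a := by
          have hma : max a (max b c) = a := by
            rw [← h2, max_eq_left h1, max_self]
          exact hma ▸ hle
        exact ⟨a, Or.inl ⟨hxa, rfl⟩, Or.inr (Or.inl ⟨h1, h2⟩)⟩
      · have hxa : x ≤ a := by
          have hma : max a (max b c) = a := by
            rw [← h2, max_eq_right h1, max_self]
          exact hma ▸ hle
        exact ⟨a, Or.inl ⟨hxa, rfl⟩, Or.inr (Or.inr ⟨h2 ▸ h1, h2.symm⟩)⟩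

/-- Characterisation of `x↑↑` and its stability under the involution
`(x₁, x₂, x₃) ↦ (x₃, x₂, x₁)`. -/
theorem stmt1 {X : Type*} [LinearOrder X] (x x₁ x₂ x₃ : X) :
    ((∃ x₂₃ : X, up x x₁ x₂₃ ∧ up x₂₃ x₂ x₃) ↔
      (x ≤ max x₁ (max x₂ x₃) ∧
        (x = max x₁ (max x₂ x₃) ∨ redMax x₁ x₂ x₃))) ∧
    ((∃ x₂₃ : X, up x x₁ x₂₃ ∧ up x₂₃ x₂ x₃) →
      ∃ x₂₃ : X, up x x₃ x₂₃ ∧ up x₂₃ x₂ x₁) := by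
  refine ⟨key x x₁ x₂ x₃, fun h => ?_⟩
  rw [key] at h ⊢
  have hmax : max x₃ (max x₂ x₁) = max x₁ (max x₂ x₃) := by
    rw [max_comm x₂ x₁, ← max_assoc, max_comm x₃ x₁, max_assoc, max_comm x₃ x₂]
  exact ⟨hmax ▸ h.1, h.2.imp (fun e => hmax ▸ e) redMax_swap⟩
end

section
/- Let X₂ be a totally ordered monoid, and for each v ∈ X₂ let A_v, B_v, C_v be doubly indexed vectors (elements of (S^{X₀})^{X₁}) equipped with an associative operation ∨₂. Define the operation ∨₃ on triply indexed vectors ρ = (A_v), σ = (B_v) by (ρ ∨₃ σ)_v = inf{ A_{v₁} ∨₂ B_{v₂} : v₁ + v₂ = v }. Then ∨₃ is associative: for all triply indexed vectors ρ, σ, τ and every v, the component of ρ ∨₃ (σ ∨₃ τ) at v and of (ρ ∨₃ σ) ∨₃ τ at v both equal inf{ A_{v₁} ∨₂ B_{v₂} ∨₂ C_{v₃} : v₁ + v₂ + v₃ = v }. -/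
/-- Associativity of the operation `∨₃` on triply indexed vectors, given an
associative operation `op = ∨₂` on doubly indexed vectors compatible with
infima: both triple products have components given by the infimum over
triples `v₁ + v₂ + v₃ = v`. -/
theorem stmt3 {D : Type*} [PartialOrder D] [InfSet D]
    (op : D → D → D)
    (hop : ∀ a b c : D, op (op a b) c = op a (op b c))
    (inf_isGLB : ∀ T : Set D, T.Nonempty → IsGLB T (sInf T))
    (op_sInf : ∀ (a : D) (T : Set D), T.Nonempty → op a (sInf T) = sInf ((op a ·) '' T))
    (sInf_op : ∀ (a : D) (T : Set D), T.Nonempty → op (sInf T) a = sInf ((op · a) '' T))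
    {X₂ : Type*} [AddCommMonoid X₂] [LinearOrder X₂]
    (vee : (X₂ → D) → (X₂ → D) → (X₂ → D))
    (hvee : ∀ (ρ σ : X₂ → D) (v : X₂),
      vee ρ σ v = sInf {d : D | ∃ v₁ v₂ : X₂, v₁ + v₂ = v ∧ d = op (ρ v₁) (σ v₂)}) :
    ∀ (ρ σ τ : X₂ → D) (v : X₂),
      vee ρ (vee σ τ) v =
        sInf {d : D | ∃ v₁ v₂ v₃ : X₂, v₁ + v₂ + v₃ = v ∧
          d = op (op (ρ v₁) (σ v₂)) (τ v₃)} ∧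
      vee (vee ρ σ) τ v =
        sInf {d : D | ∃ v₁ v₂ v₃ : X₂, v₁ + v₂ + v₃ = v ∧
          d = op (op (ρ v₁) (σ v₂)) (τ v₃)} := by
  -- helper lemmas
  have hle : ∀ (T : Set D), T.Nonempty → ∀ x : D, (x ≤ sInf T ↔ x ∈ lowerBounds T) := by
    intro T hT x
    constructor
    · intro hx y hy; exact hx.trans ((inf_isGLB T hT).1 hy)
    · intro hx; exact (inf_isGLB T hT).2 hx
  have glb_unique : ∀ (S T : Set D), S.Nonempty → T.Nonempty →
      lowerBounds S = lowerBounds T → sInf S = sInf T := by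
    intro S T hS hT h
    have h1 := inf_isGLB S hS
    have h2 := inf_isGLB T hT
    exact le_antisymm (h2.2 (h ▸ h1.1)) (h1.2 (h ▸ h2.1))
  intro ρ σ τ v
  set T : Set D := {d : D | ∃ v₁ v₂ v₃ : X₂, v₁ + v₂ + v₃ = v ∧
      d = op (op (ρ v₁) (σ v₂)) (τ v₃)} with hT
  have hTne : T.Nonempty := ⟨op (op (ρ v) (σ 0)) (τ 0), v, 0, 0, by simp, rfl⟩
  have hBne : ∀ w : X₂, ({d : D | ∃ v₂ v₃ : X₂, v₂ + v₃ = w ∧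
      d = op (σ v₂) (τ v₃)} : Set D).Nonempty := fun w =>
    ⟨op (σ w) (τ 0), w, 0, by simp, rfl⟩
  have hB'ne : ∀ w : X₂, ({d : D | ∃ v₁ v₂ : X₂, v₁ + v₂ = w ∧
      d = op (ρ v₁) (σ v₂)} : Set D).Nonempty := fun w =>
    ⟨op (ρ w) (σ 0), w, 0, by simp, rfl⟩
  constructor
  · rw [hvee]
    refine glb_unique _ _ ⟨op (ρ v) (vee σ τ 0), v, 0, by simp, rfl⟩ hTne ?_
    ext x
    constructor
    · rintro hx d ⟨v₁, v₂, v₃, hs, rfl⟩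
      have hmem : op (ρ v₁) (vee σ τ (v₂ + v₃)) ∈
          {d : D | ∃ v₁ v₂ : X₂, v₁ + v₂ = v ∧ d = op (ρ v₁) (vee σ τ v₂)} :=
        ⟨v₁, v₂ + v₃, by rw [← add_assoc, hs], rfl⟩
      have h1 : x ≤ op (ρ v₁) (vee σ τ (v₂ + v₃)) := hx hmem
      rw [hvee, op_sInf _ _ (hBne _)] at h1
      have h2 : op (ρ v₁) (op (σ v₂) (τ v₃)) ∈
          (op (ρ v₁) ·) '' {d : D | ∃ v₂' v₃' : X₂, v₂' + v₃' = v₂ + v₃ ∧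
            d = op (σ v₂') (τ v₃')} :=
        ⟨op (σ v₂) (τ v₃), ⟨v₂, v₃, rfl, rfl⟩, rfl⟩
      rw [hop]
      exact h1.trans ((inf_isGLB _ ⟨_, h2⟩).1 h2)
    · rintro hx d ⟨v₁, v₂, h12, rfl⟩
      rw [hvee, op_sInf _ _ (hBne v₂)]
      rw [hle _ (Set.Nonempty.image _ (hBne v₂))]
      rintro y ⟨b, ⟨v₂', v₃', hb, rfl⟩, rfl⟩
      have : op (op (ρ v₁) (σ v₂')) (τ v₃') ∈ T :=
        ⟨v₁, v₂', v₃', by rw [add_assoc, hb, h12], rfl⟩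
      simpa [hop] using hx this
  · rw [hvee]
    refine glb_unique _ _ ⟨op (vee ρ σ v) (τ 0), v, 0, by simp, rfl⟩ hTne ?_
    ext x
    constructor
    · rintro hx d ⟨v₁, v₂, v₃, hs, rfl⟩
      have hmem : op (vee ρ σ (v₁ + v₂)) (τ v₃) ∈
          {d : D | ∃ w₁ w₂ : X₂, w₁ + w₂ = v ∧ d = op (vee ρ σ w₁) (τ w₂)} :=
        ⟨v₁ + v₂, v₃, hs, rfl⟩
      have h1 : x ≤ op (vee ρ σ (v₁ + v₂)) (τ v₃) := hx hmem
      rw [hvee, sInf_op _ _ (hB'ne _)] at h1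
      have h2 : op (op (ρ v₁) (σ v₂)) (τ v₃) ∈
          (op · (τ v₃)) '' {d : D | ∃ w₁ w₂ : X₂, w₁ + w₂ = v₁ + v₂ ∧
            d = op (ρ w₁) (σ w₂)} :=
        ⟨op (ρ v₁) (σ v₂), ⟨v₁, v₂, rfl, rfl⟩, rfl⟩
      exact h1.trans ((inf_isGLB _ ⟨_, h2⟩).1 h2)
    · rintro hx d ⟨v₁, v₂, h12, rfl⟩
      rw [hvee, sInf_op _ _ (hB'ne v₁)]
      rw [hle _ (Set.Nonempty.image _ (hB'ne v₁))]
      rintro y ⟨b, ⟨v₁', v₂', hb, rfl⟩, rfl⟩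
      exact hx ⟨v₁', v₂', v₂, by rw [hb, h12], rfl⟩
end

section
/- Let Φ be a root system in a real vector space V, Ψ = Φ ∪ {0}, and S a partially ordered commutative monoid with infima of non-empty sets. For functions f, f' : Ψ → S define (f ⋈ f')(α) = inf{ f(a) + f'(a') : a, a' ∈ Ψ, a + a' = α }. Assume: (i) f is concave, meaning f(a + a') ≤ f(a) + f(a') whenever a, a', a + a' ∈ Ψ; (ii) F : Ψ → S satisfies F ≤ f ⋈ f' and F ≤ f ⋈ F; and (iii) for every α ∈ Ψ and every decomposition α = a₁ + ⋯ + a_n + a' with all a_i, a' ∈ Ψ and n ≥ 2, either a₁ + ⋯ + a_n ∈ Ψ or there exists an index i₀ with α − a_{i₀} ∈ Ψ. Then for every α ∈ Ψ and every decomposition α = a₁ + ⋯ + a_n + a' with a_i, a' ∈ Ψ, one has F(α) ≤ f(a₁) + ⋯ + f(a_n) + f'(a'). -/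
/-- Auxiliary: concavity extends to arbitrary sums landing in `Ψ`. -/
theorem aux4 {V : Type*} [AddCommGroup V]
    {S : Type*} [AddCommMonoid S] [PartialOrder S] [IsOrderedAddMonoid S]
    (Ψ : Set V)
    (f : V → S)
    (hconc : ∀ a a' : V, a ∈ Ψ → a' ∈ Ψ → a + a' ∈ Ψ → f (a + a') ≤ f a + f a')
    (hiii : ∀ (α : V) (l : List V) (a' : V), α ∈ Ψ → (∀ x ∈ l, x ∈ Ψ) → a' ∈ Ψ →
      2 ≤ l.length → l.sum + a' = α → (l.sum ∈ Ψ ∨ ∃ a ∈ l, α - a ∈ Ψ)) :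
    ∀ (n : ℕ) (l : List V), l.length = n → l ≠ [] → (∀ x ∈ l, x ∈ Ψ) → l.sum ∈ Ψ →
      f l.sum ≤ (l.map f).sum := by
  classical
  intro n
  induction n using Nat.strong_induction_on with
  | _ n ih =>
    intro l hlen hne hmem hsum
    match l, hne, hmem, hsum, hlen with
    | [a], _, hmem, hsum, hlen => simp
    | [a, b], _, hmem, hsum, hlen =>
      have := hconc a b (hmem a (by simp)) (hmem b (by simp)) (by simpa using hsum)
      simpa using this
    | a :: b :: c :: t, _, hmem, hsum, hlen =>
      set l : List V := a :: b :: c :: t with hl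
      set r : List V := b :: c :: t with hr
      have hrmem : ∀ x ∈ r, x ∈ Ψ := fun x hx => hmem x (by simp [hl, hr] at hx ⊢; tauto)
      have hsum' : r.sum + a = l.sum := by simp [hl, hr]; abel
      rcases hiii l.sum r a hsum hrmem (hmem a (by simp [hl])) (by simp [hr])
          hsum' with h1 | ⟨x, hxmem, hx⟩
      · have h2 : f l.sum ≤ f a + f r.sum := by
          have := hconc a r.sum (hmem a (by simp [hl])) h1 (by rw [add_comm, hsum']; exact hsum)
          rwa [add_comm a r.sum, hsum'] at this
        have hn : t.length + 3 = n := by simp [hl, hr] at hlen; omega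
        have h3 : f r.sum ≤ (r.map f).sum :=
          ih (n - 1) (by omega) r (by simp [hr]; omega) (by simp [hr]) hrmem h1
        calc f l.sum ≤ f a + f r.sum := h2
          _ ≤ f a + (r.map f).sum := add_le_add_right h3 _
          _ = (l.map f).sum := by simp [hl, hr]
      · have hxl : x ∈ l := by simp [hl, hr] at hxmem ⊢; tauto
        have hperm : l.Perm (x :: l.erase x) := List.perm_cons_erase hxl
        have hse : (l.erase x).sum = l.sum - x := by
          have := hperm.sum_eq
          simp at this; rw [this]; abel
        have h2 : f l.sum ≤ f x + f (l.sum - x) := by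
          have := hconc x (l.sum - x) (hmem x hxl) hx (by simpa using hsum)
          simpa using this
        have hlene : (l.erase x).length = n - 1 := by
          rw [List.length_erase_of_mem hxl, hlen]
        have hne' : l.erase x ≠ [] := by
          intro h; rw [← List.length_eq_zero_iff] at h; rw [hlene] at h
          simp [hl, hr] at hlen; omega
        have h3 : f (l.erase x).sum ≤ ((l.erase x).map f).sum := by
          refine ih (n - 1) ?_ _ hlene hne' (fun y hy => hmem y (List.mem_of_mem_erase hy)) ?_
          · simp [hl, hr] at hlen; omega
          · rw [hse]; exact hx
        have h4 : (l.map f).sum = f x + ((l.erase x).map f).sum := by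
          have := (hperm.map f).sum_eq
          simpa using this
        rw [h4]
        calc f l.sum ≤ f x + f (l.sum - x) := h2
          _ = f x + f (l.erase x).sum := by rw [hse]
          _ ≤ f x + ((l.erase x).map f).sum := add_le_add_right h3 _

/-- If `f` is concave on `Ψ = Φ ∪ {0}`, `F ≤ f ⋈ f'` and `F ≤ f ⋈ F`, and the
root-system decomposition property holds, then `F(α) ≤ Σ f(aᵢ) + f'(a')` for
every decomposition `α = a₁ + ⋯ + aₙ + a'` with all terms in `Ψ`. -/
theorem stmt4 {V : Type*} [AddCommGroup V] [Module ℝ V]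
    {S : Type*} [AddCommMonoid S] [PartialOrder S] [IsOrderedAddMonoid S]
    (Ψ : Set V) (hΨ0 : (0 : V) ∈ Ψ)
    (f f' F : V → S)
    (hconc : ∀ a a' : V, a ∈ Ψ → a' ∈ Ψ → a + a' ∈ Ψ → f (a + a') ≤ f a + f a')
    (hF1 : ∀ a a' : V, a ∈ Ψ → a' ∈ Ψ → a + a' ∈ Ψ → F (a + a') ≤ f a + f' a')
    (hF2 : ∀ a a' : V, a ∈ Ψ → a' ∈ Ψ → a + a' ∈ Ψ → F (a + a') ≤ f a + F a')
    (hiii : ∀ (α : V) (l : List V) (a' : V), α ∈ Ψ → (∀ x ∈ l, x ∈ Ψ) → a' ∈ Ψ →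
      2 ≤ l.length → l.sum + a' = α → (l.sum ∈ Ψ ∨ ∃ a ∈ l, α - a ∈ Ψ)) :
    ∀ (α : V) (l : List V) (a' : V), α ∈ Ψ → (∀ x ∈ l, x ∈ Ψ) → a' ∈ Ψ → l ≠ [] →
      l.sum + a' = α → F α ≤ (l.map f).sum + f' a' := by
  classical
  suffices h : ∀ (n : ℕ) (α : V) (l : List V) (a' : V), l.length = n → α ∈ Ψ →
      (∀ x ∈ l, x ∈ Ψ) → a' ∈ Ψ → l ≠ [] → l.sum + a' = α →
      F α ≤ (l.map f).sum + f' a' by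
    intro α l a' h1 h2 h3 h4 h5
    exact h l.length α l a' rfl h1 h2 h3 h4 h5
  intro n
  induction n using Nat.strong_induction_on with
  | _ n ih =>
    intro α l a' hlen hα hmem ha' hne hsum
    match l, hne, hmem, hsum, hlen with
    | [a], _, hmem, hsum, hlen =>
      have hs : a + a' = α := by simpa using hsum
      have := hF1 a a' (hmem a (by simp)) ha' (hs ▸ hα)
      rw [hs] at this
      simpa using this
    | a :: b :: t, _, hmem, hsum, hlen =>
      set l : List V := a :: b :: t with hl
      rcases hiii α l a' hα hmem ha' (by simp [hl]) hsum with h1 | ⟨x, hxmem, hx⟩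
      · have h2 : F α ≤ f l.sum + f' a' := by
          have := hF1 l.sum a' h1 ha' (by rw [hsum]; exact hα)
          rwa [hsum] at this
        have h3 : f l.sum ≤ (l.map f).sum :=
          aux4 Ψ f hconc hiii n l hlen (by simp [hl]) hmem h1
        exact h2.trans (add_le_add_left h3 _)
      · have hperm : l.Perm (x :: l.erase x) := List.perm_cons_erase hxmem
        have hse : (l.erase x).sum = l.sum - x := by
          have := hperm.sum_eq; simp at this; rw [this]; abel
        have h2 : F α ≤ f x + F (α - x) := by
          have := hF2 x (α - x) (hmem x hxmem) hx (by simpa using hα)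
          simpa using this
        have hlene : (l.erase x).length = n - 1 := by
          rw [List.length_erase_of_mem hxmem, hlen]
        have hne' : l.erase x ≠ [] := by
          intro h; rw [← List.length_eq_zero_iff] at h; rw [hlene] at h
          simp [hl] at hlen; omega
        have hαx : α - x ∈ Ψ := hx
        have h3 : F (α - x) ≤ ((l.erase x).map f).sum + f' a' := by
          refine ih (n - 1) ?_ (α - x) (l.erase x) a' hlene hαx
            (fun y hy => hmem y (List.mem_of_mem_erase hy)) ha' hne' ?_
          · simp [hl] at hlen; omega
          · rw [hse, ← hsum]; abel
        have h4 : (l.map f).sum = f x + ((l.erase x).map f).sum := by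
          have := (hperm.map f).sum_eq; simpa using this
        calc F α ≤ f x + F (α - x) := h2
          _ ≤ f x + (((l.erase x).map f).sum + f' a') := add_le_add_right h3 _
          _ = (l.map f).sum + f' a' := by rw [h4, add_assoc]
end

section
/- Let V be a vector space over a field k, γ a diagonalisable automorphism of V, L a subgroup of k^×, and n an integer. Then C_V^L(γ) ⊆ C_V^{L^n}(γ^n), where L^n = { ℓ^n : ℓ ∈ L }. Moreover, if the group μ_n(k) of n-th roots of unity in k is contained in L, then C_V^L(γ) = C_V^{L^n}(γ^n); more precisely, for every λ ∈ k^×, the L^n-close λ^n-eigenspace of γ^n equals the L-close λ-eigenspace of γ. -/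
open Module.End

section helpers

variable {k V : Type*} [Field k] [AddCommGroup V] [Module k V]

lemma stmt7.pow_apply (γ : (Module.End k V)ˣ) (μ : kˣ) (v : V)
    (h : (γ : Module.End k V) v = (μ : k) • v) (m : ℕ) :
    ((γ ^ m : (Module.End k V)ˣ) : Module.End k V) v = ((μ ^ m : kˣ) : k) • v := by
  induction m with
  | zero => simp
  | succ i ih =>
    rw [pow_succ, pow_succ, Units.val_mul, Module.End.mul_apply, h, map_smul, ih, smul_smul,
      Units.val_mul, mul_comm]

lemma stmt7.inv_apply (γ : (Module.End k V)ˣ) (μ : kˣ) (v : V)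
    (h : (γ : Module.End k V) v = (μ : k) • v) :
    ((γ⁻¹ : (Module.End k V)ˣ) : Module.End k V) v = ((μ⁻¹ : kˣ) : k) • v := by
  have h2 : ((γ⁻¹ : (Module.End k V)ˣ) : Module.End k V) ((γ : Module.End k V) v) = v := by
    rw [← Module.End.mul_apply, ← Units.val_mul, inv_mul_cancel, Units.val_one,
      Module.End.one_apply]
  rw [h, map_smul] at h2
  have h3 := congrArg (fun w => ((μ⁻¹ : kˣ) : k) • w) h2
  have h4 : ((μ⁻¹ : kˣ) : k) • v = ((γ⁻¹ : (Module.End k V)ˣ) : Module.End k V) v := by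
    simpa [smul_smul] using h3.symm
  exact h4.symm

lemma stmt7.zpow_apply (γ : (Module.End k V)ˣ) (μ : kˣ) (v : V)
    (h : (γ : Module.End k V) v = (μ : k) • v) (n : ℤ) :
    ((γ ^ n : (Module.End k V)ˣ) : Module.End k V) v = ((μ ^ n : kˣ) : k) • v := by
  cases n with
  | ofNat m => simpa [zpow_natCast] using stmt7.pow_apply γ μ v h m
  | negSucc m =>
    rw [zpow_negSucc, zpow_negSucc, ← inv_pow, ← inv_pow]
    exact stmt7.pow_apply γ⁻¹ μ⁻¹ v (stmt7.inv_apply γ μ v h) (m + 1)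

lemma stmt7.eig_le (γ : (Module.End k V)ˣ) (μ : kˣ) (n : ℤ) :
    eigenspace (γ : Module.End k V) (μ : k) ≤
      eigenspace ((γ ^ n : (Module.End k V)ˣ) : Module.End k V) ((μ ^ n : kˣ) : k) :=
  fun _ hv => mem_eigenspace_iff.2 (stmt7.zpow_apply γ μ _ (mem_eigenspace_iff.1 hv) n)

lemma stmt7.eig_zero (γ : (Module.End k V)ˣ) :
    eigenspace (γ : Module.End k V) (0 : k) = ⊥ := by
  rw [eq_bot_iff]
  intro v hv
  have h := mem_eigenspace_iff.1 hv
  rw [zero_smul] at h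
  have h2 : ((γ⁻¹ : (Module.End k V)ˣ) : Module.End k V) ((γ : Module.End k V) v) = v := by
    rw [← Module.End.mul_apply, ← Units.val_mul, inv_mul_cancel, Units.val_one,
      Module.End.one_apply]
  rw [h, map_zero] at h2
  simpa [← h2] using Submodule.zero_mem _

/-- decomposition of an eigenspace of `γ ^ n` into eigenspaces of `γ`. -/
lemma stmt7.decomp (γ : (Module.End k V)ˣ)
    (hdiag : ⨆ μ : k, Module.End.eigenspace (γ : Module.End k V) μ = ⊤)
    (n : ℤ) (c : k) :
    eigenspace ((γ ^ n : (Module.End k V)ˣ) : Module.End k V) c ≤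
      ⨆ (μ : kˣ) (_ : ((μ ^ n : kˣ) : k) = c), eigenspace (γ : Module.End k V) (μ : k) := by
  classical
  set E : k → Submodule k V := fun μ => eigenspace (γ : Module.End k V) μ with hE
  set E' : k → Submodule k V :=
    fun d => eigenspace ((γ ^ n : (Module.End k V)ˣ) : Module.End k V) d with hE'
  set W : Submodule k V := ⨆ (μ : kˣ) (_ : ((μ ^ n : kˣ) : k) = c), E (μ : k) with hW
  set W' : Submodule k V :=
    ⨆ (μ : kˣ) (_ : ¬ ((μ ^ n : kˣ) : k) = c), E (μ : k) with hW'
  have hWle : W ≤ E' c := by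
    refine iSup_le fun μ => iSup_le fun hμ => ?_
    simpa [hμ] using stmt7.eig_le γ μ n
  have hW'le : W' ≤ ⨆ (d : k) (_ : d ≠ c), E' d := by
    refine iSup_le fun μ => iSup_le fun hμ => ?_
    refine le_trans (stmt7.eig_le γ μ n) ?_
    exact le_iSup₂ (f := fun (d : k) (_ : d ≠ c) => E' d) ((μ ^ n : kˣ) : k) hμ
  have hsup : W ⊔ W' = ⊤ := by
    rw [← top_le_iff, ← hdiag]
    refine iSup_le fun μ => ?_
    by_cases hμ0 : μ = 0
    · subst hμ0
      show eigenspace (γ : Module.End k V) (0 : k) ≤ W ⊔ W'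
      rw [stmt7.eig_zero γ]
      exact bot_le
    · set u : kˣ := Units.mk0 μ hμ0 with hu
      by_cases hc : ((u ^ n : kˣ) : k) = c
      · exact le_trans (le_iSup₂ (f := fun (μ : kˣ) (_ : ((μ ^ n : kˣ) : k) = c) => E (μ : k))
          u hc) le_sup_left
      · exact le_trans (le_iSup₂ (f := fun (μ : kˣ) (_ : ¬ ((μ ^ n : kˣ) : k) = c) => E (μ : k))
          u hc) le_sup_right
  have hdisj : Disjoint (E' c) (⨆ (d : k) (_ : d ≠ c), E' d) :=
    (Module.End.eigenspaces_iSupIndep ((γ ^ n : (Module.End k V)ˣ) : Module.End k V)) c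
  intro v hv
  have hvtop : v ∈ W ⊔ W' := by rw [hsup]; trivial
  obtain ⟨w, hw, w', hw', hvw⟩ := Submodule.mem_sup.1 hvtop
  have hw'2 : w' ∈ E' c := by
    have : w' = v - w := by rw [← hvw]; abel
    rw [this]
    exact Submodule.sub_mem _ hv (hWle hw)
  have : w' = 0 := by
    have := hdisj.le_bot ⟨hw'2, hW'le hw'⟩
    simpa using this
  rw [← hvw, this, add_zero]
  exact hw

end helpers

/-- `C_V^L(γ) ⊆ C_V^{Lⁿ}(γⁿ)`, with equality (and more precisely, equality of
`Lⁿ`-close `λⁿ`-eigenspaces of `γⁿ` with `L`-close `λ`-eigenspaces of `γ`)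
when `μ_n(k) ⊆ L`. -/
theorem stmt7 {k V : Type*} [Field k] [AddCommGroup V] [Module k V]
    (γ : (Module.End k V)ˣ)
    (hdiag : ⨆ μ : k, Module.End.eigenspace (γ : Module.End k V) μ = ⊤)
    (L : Subgroup kˣ) (n : ℤ) :
    ((⨆ l : L, Module.End.eigenspace (γ : Module.End k V) ((l : kˣ) : k)) ≤
      ⨆ l : L.map (zpowGroupHom n),
        Module.End.eigenspace ((γ ^ n : (Module.End k V)ˣ) : Module.End k V)
          ((l : kˣ) : k)) ∧
    ((∀ ζ : kˣ, ζ ^ n = 1 → ζ ∈ L) →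
      (∀ ν : kˣ,
        (⨆ l : L.map (zpowGroupHom n),
          Module.End.eigenspace ((γ ^ n : (Module.End k V)ˣ) : Module.End k V)
            ((ν ^ n * l : kˣ) : k)) =
        ⨆ l : L, Module.End.eigenspace (γ : Module.End k V) ((ν * l : kˣ) : k)) ∧
      (⨆ l : L, Module.End.eigenspace (γ : Module.End k V) ((l : kˣ) : k)) =
        ⨆ l : L.map (zpowGroupHom n),
          Module.End.eigenspace ((γ ^ n : (Module.End k V)ˣ) : Module.End k V)
            ((l : kˣ) : k)) := by
  have part1 : (⨆ l : L, Module.End.eigenspace (γ : Module.End k V) ((l : kˣ) : k)) ≤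
      ⨆ l : L.map (zpowGroupHom n),
        Module.End.eigenspace ((γ ^ n : (Module.End k V)ˣ) : Module.End k V)
          ((l : kˣ) : k) := by
    refine iSup_le fun l => ?_
    have hmem : ((l : kˣ) ^ n : kˣ) ∈ L.map (zpowGroupHom n) := ⟨(l : kˣ), l.2, rfl⟩
    exact le_trans (stmt7.eig_le γ (l : kˣ) n)
      (le_iSup (fun l : L.map (zpowGroupHom n) =>
        Module.End.eigenspace ((γ ^ n : (Module.End k V)ˣ) : Module.End k V) ((l : kˣ) : k))
        ⟨_, hmem⟩)
  refine ⟨part1, fun hroots => ?_⟩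
  have key : ∀ ν : kˣ,
      (⨆ l : L.map (zpowGroupHom n),
        Module.End.eigenspace ((γ ^ n : (Module.End k V)ˣ) : Module.End k V)
          ((ν ^ n * l : kˣ) : k)) =
      ⨆ l : L, Module.End.eigenspace (γ : Module.End k V) ((ν * l : kˣ) : k) := by
    intro ν
    apply le_antisymm
    · refine iSup_le fun l => ?_
      obtain ⟨ℓ, hℓL, hℓ⟩ := l.2
      have hl : (l : kˣ) = ℓ ^ n := hℓ.symm
      have hc : (ν ^ n * (l : kˣ) : kˣ) = ((ν * ℓ) ^ n : kˣ) := by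
        rw [hl, mul_zpow]
      rw [hc]
      refine le_trans (stmt7.decomp γ hdiag n _) ?_
      refine iSup_le fun μ => iSup_le fun hμ => ?_
      have hμu : (μ ^ n : kˣ) = ((ν * ℓ) ^ n : kˣ) := Units.ext hμ
      set ζ : kˣ := μ * (ν * ℓ)⁻¹ with hζ
      have hζn : ζ ^ n = 1 := by
        rw [hζ, mul_zpow, hμu, inv_zpow, mul_inv_cancel]
      have hζL : ζ ∈ L := hroots ζ hζn
      have hμeq : μ = ν * (ζ * ℓ) := by
        rw [hζ]; ext; simp; field_simp
      have hmem : ζ * ℓ ∈ L := L.mul_mem hζL hℓL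
      rw [hμeq]
      exact le_iSup (fun l : L =>
        Module.End.eigenspace (γ : Module.End k V) ((ν * l : kˣ) : k)) ⟨ζ * ℓ, hmem⟩
    · refine iSup_le fun l => ?_
      have hmem : ((l : kˣ) ^ n : kˣ) ∈ L.map (zpowGroupHom n) := ⟨(l : kˣ), l.2, rfl⟩
      have h1 := stmt7.eig_le γ (ν * (l : kˣ)) n
      have hc : ((ν * (l : kˣ)) ^ n : kˣ) = (ν ^ n * (l : kˣ) ^ n : kˣ) := mul_zpow _ _ _
      rw [hc] at h1
      exact le_trans h1 (le_iSup (fun l : L.map (zpowGroupHom n) =>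
        Module.End.eigenspace ((γ ^ n : (Module.End k V)ˣ) : Module.End k V)
          ((ν ^ n * l : kˣ) : k)) ⟨_, hmem⟩)
  refine ⟨key, ?_⟩
  have h1 := key 1
  simp only [one_zpow, one_mul] at h1
  exact h1.symm
end

section
/- Let V be a finite-dimensional vector space over a field k, γ ∈ GL(V) a diagonalisable element of finite order N, and L a subgroup of k^×. Suppose n is an integer such that μ_n(k) contains μ_N(k) ∩ L and μ_n(k) is contained in L. Then the L-close eigenspaces of γ in V are precisely the eigenspaces of γ^n in V; consequently, the subgroup of GL(V) preserving every L-close eigenspace of γ equals the centraliser of γ^n in GL(V). -/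
namespace Stmt8Aux

variable {k V : Type*} [Field k] [AddCommGroup V] [Module k V]

lemma pow_smul (f : Module.End k V) (μ : k) (v : V) (h : f v = μ • v) (m : ℕ) :
    (f ^ m) v = μ ^ m • v := by
  induction m with
  | zero => simp
  | succ i ih =>
    rw [pow_succ, Module.End.mul_apply, h, map_smul, ih, smul_smul, pow_succ,
      mul_comm]

lemma zpow_smul (γ : (Module.End k V)ˣ) (μ : kˣ) (v : V)
    (h : (γ : Module.End k V) v = ((μ : kˣ) : k) • v) (m : ℤ) :
    ((γ ^ m : (Module.End k V)ˣ) : Module.End k V) v = ((μ ^ m : kˣ) : k) • v := by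
  have hinv : ((γ⁻¹ : (Module.End k V)ˣ) : Module.End k V) v = ((μ⁻¹ : kˣ) : k) • v := by
    have h0 : ((γ⁻¹ : (Module.End k V)ˣ) : Module.End k V) ((γ : Module.End k V) v) = v := by
      rw [← Module.End.mul_apply, ← Units.val_mul, inv_mul_cancel, Units.val_one,
        Module.End.one_apply]
    rw [h, map_smul] at h0
    have := congrArg (fun w => ((μ⁻¹ : kˣ) : k) • w) h0
    simpa [smul_smul] using this
  induction m using Int.induction_on with
  | zero => simp
  | succ i ih =>
    rw [zpow_add_one, Units.val_mul, Module.End.mul_apply, h, map_smul, ih,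
      smul_smul, zpow_add_one, Units.val_mul, mul_comm]
  | pred i ih =>
    rw [zpow_sub_one, Units.val_mul, Module.End.mul_apply, hinv, map_smul, ih,
      smul_smul, zpow_sub_one, Units.val_mul, mul_comm]

lemma eigen_unit (γ : (Module.End k V)ˣ) (N : ℕ) (hNpos : 0 < N)
    (hNord : γ ^ N = 1) {μ : k}
    (hμ : Module.End.eigenspace (γ : Module.End k V) μ ≠ ⊥) :
    ∃ μ' : kˣ, ((μ' : kˣ) : k) = μ ∧ μ' ^ N = 1 := by
  obtain ⟨v, hv, hv0⟩ := Submodule.ne_bot_iff _ |>.mp hμ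
  have hv' : (γ : Module.End k V) v = μ • v := Module.End.mem_eigenspace_iff.mp hv
  have hpow : ((γ : Module.End k V) ^ N) v = μ ^ N • v := pow_smul _ _ _ hv' N
  have hone : ((γ : Module.End k V) ^ N) v = v := by
    rw [← Units.val_pow_eq_pow_val, hNord, Units.val_one, Module.End.one_apply]
  have hμN : μ ^ N = 1 := by
    have h' : (μ ^ N - 1) • v = 0 := by
      rw [sub_smul, one_smul, ← hpow, hone, sub_self]
    rcases smul_eq_zero.mp h' with h | h
    · exact sub_eq_zero.mp h
    · exact absurd h hv0
  have hμ0 : μ ≠ 0 := by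
    intro h0
    rw [h0, zero_pow hNpos.ne'] at hμN
    exact zero_ne_one hμN
  refine ⟨Units.mk0 μ hμ0, rfl, Units.ext ?_⟩
  rw [Units.val_pow_eq_pow_val, Units.val_one]
  exact hμN

end Stmt8Aux

open Stmt8Aux in
/-- For `γ ∈ GL(V)` diagonalisable of finite order `N`, and `n` with
`μ_N(k) ∩ L ⊆ μ_n(k) ⊆ L`: the `L`-close eigenspaces of `γ` are precisely the
eigenspaces of `γⁿ`, and the subgroup of `GL(V)` preserving every `L`-close
eigenspace of `γ` is the centraliser of `γⁿ`. -/
theorem stmt8 {k V : Type*} [Field k] [AddCommGroup V] [Module k V]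
    [FiniteDimensional k V]
    (γ : (Module.End k V)ˣ)
    (hdiag : ⨆ μ : k, Module.End.eigenspace (γ : Module.End k V) μ = ⊤)
    (N : ℕ) (hNpos : 0 < N) (hNord : γ ^ N = 1)
    (L : Subgroup kˣ) (n : ℤ)
    (h1 : ∀ ζ : kˣ, ζ ^ N = 1 → ζ ∈ L → ζ ^ n = 1)
    (h2 : ∀ ζ : kˣ, ζ ^ n = 1 → ζ ∈ L) :
    (∀ lam : kˣ, Module.End.eigenspace (γ : Module.End k V) ((lam : kˣ) : k) ≠ ⊥ →
      (⨆ l : L, Module.End.eigenspace (γ : Module.End k V) ((lam * l : kˣ) : k)) =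
        Module.End.eigenspace ((γ ^ n : (Module.End k V)ˣ) : Module.End k V)
          ((lam ^ n : kˣ) : k)) ∧
    (∀ c : k,
      Module.End.eigenspace ((γ ^ n : (Module.End k V)ˣ) : Module.End k V) c ≠ ⊥ →
      ∃ lam : kˣ,
        Module.End.eigenspace ((γ ^ n : (Module.End k V)ˣ) : Module.End k V) c =
          ⨆ l : L, Module.End.eigenspace (γ : Module.End k V) ((lam * l : kˣ) : k)) ∧
    (∀ g : (Module.End k V)ˣ,
      (∀ lam : kˣ,
        (⨆ l : L, Module.End.eigenspace (γ : Module.End k V)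
            ((lam * l : kˣ) : k)).map (g : Module.End k V) ≤
          ⨆ l : L, Module.End.eigenspace (γ : Module.End k V) ((lam * l : kˣ) : k)) ↔
        Commute g (γ ^ n)) := by
  set T : Module.End k V := (γ : Module.End k V) with hTdef
  set E : Module.End k V := ((γ ^ n : (Module.End k V)ˣ) : Module.End k V) with hEdef
  -- K1 : each unit eigenspace of T sits inside the corresponding eigenspace of E
  have hK1 : ∀ μ : kˣ, Module.End.eigenspace T ((μ : kˣ) : k) ≤
      Module.End.eigenspace E ((μ ^ n : kˣ) : k) := by
    intro μ v hv
    exact Module.End.mem_eigenspace_iff.mpr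
      (zpow_smul γ μ v (Module.End.mem_eigenspace_iff.mp hv) n)
  -- eigenvalues of T are N-th roots of unity
  have hroot : ∀ μ : kˣ, Module.End.eigenspace T ((μ : kˣ) : k) ≠ ⊥ → μ ^ N = 1 := by
    intro μ hμ
    obtain ⟨μ', hval, hN⟩ := eigen_unit γ N hNpos hNord hμ
    rwa [Units.ext hval] at hN
  -- arithmetic facts
  have hsame : ∀ μ' lam : kˣ, μ' ^ N = 1 → lam ^ N = 1 → (lam⁻¹ * μ') ∈ L →
      μ' ^ n = lam ^ n := by
    intro μ' lam hμN hlamN hmem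
    have hζN : (lam⁻¹ * μ') ^ N = 1 := by
      rw [mul_pow, inv_pow, hμN, hlamN, inv_one, one_mul]
    have := h1 _ hζN hmem
    rw [mul_zpow, inv_zpow] at this
    calc μ' ^ n = lam ^ n * ((lam ^ n)⁻¹ * μ' ^ n) := by group
      _ = lam ^ n * 1 := by rw [this]
      _ = lam ^ n := mul_one _
  have hdiff : ∀ μ' lam : kˣ, μ' ^ n = lam ^ n → (lam⁻¹ * μ') ∈ L := by
    intro μ' lam h
    refine h2 _ ?_
    rw [mul_zpow, inv_zpow, h, inv_mul_cancel]
  -- ≤ direction of claim 1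
  have keyle : ∀ lam : kˣ, lam ^ N = 1 →
      (⨆ l : L, Module.End.eigenspace T ((lam * l : kˣ) : k)) ≤
        Module.End.eigenspace E ((lam ^ n : kˣ) : k) := by
    intro lam hlamN
    refine iSup_le fun l => ?_
    by_cases hb : Module.End.eigenspace T ((lam * l : kˣ) : k) = ⊥
    · rw [hb]; exact bot_le
    · have hllN : (lam * (l : kˣ)) ^ N = 1 := hroot _ hb
      have hlmem : (lam⁻¹ * (lam * (l : kˣ))) ∈ L := by
        have : lam⁻¹ * (lam * (l : kˣ)) = (l : kˣ) := by group
        rw [this]; exact l.2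
      have heq : (lam * (l : kˣ)) ^ n = lam ^ n := hsame _ _ hllN hlamN hlmem
      have := hK1 (lam * (l : kˣ))
      rwa [heq] at this
  -- claim 1
  have key1 : ∀ lam : kˣ, Module.End.eigenspace T ((lam : kˣ) : k) ≠ ⊥ →
      (⨆ l : L, Module.End.eigenspace T ((lam * l : kˣ) : k)) =
        Module.End.eigenspace E ((lam ^ n : kˣ) : k) := by
    intro lam hlamne
    have hlamN : lam ^ N = 1 := hroot lam hlamne
    set W : Submodule k V := ⨆ l : L, Module.End.eigenspace T ((lam * l : kˣ) : k) with hWdef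
    set S : Submodule k V :=
      ⨆ (μ : k) (_ : ¬ ∃ l : L, μ = ((lam * l : kˣ) : k)), Module.End.eigenspace T μ with hSdef
    have htop : W ⊔ S = ⊤ := by
      rw [eq_top_iff, ← hdiag]
      refine iSup_le fun μ => ?_
      by_cases hμ : ∃ l : L, μ = ((lam * l : kˣ) : k)
      · obtain ⟨l, rfl⟩ := hμ
        exact le_sup_of_le_left (le_iSup (fun l : L =>
          Module.End.eigenspace T ((lam * l : kˣ) : k)) l)
      · exact le_sup_of_le_right (le_iSup₂_of_le μ hμ le_rfl)
    have hSle : S ≤ ⨆ (c : k) (_ : c ≠ ((lam ^ n : kˣ) : k)),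
        Module.End.eigenspace E c := by
      refine iSup₂_le fun μ hμ => ?_
      by_cases hb : Module.End.eigenspace T μ = ⊥
      · rw [hb]; exact bot_le
      · obtain ⟨μ', rfl, hμ'N⟩ := eigen_unit γ N hNpos hNord hb
        have hne : ((μ' ^ n : kˣ) : k) ≠ ((lam ^ n : kˣ) : k) := by
          intro hcc
          refine hμ ⟨⟨lam⁻¹ * μ', hdiff _ _ (Units.ext hcc)⟩, ?_⟩
          have hu : lam * (lam⁻¹ * μ') = μ' := by group
          exact (congrArg Units.val hu).symm
        exact le_iSup₂_of_le ((μ' ^ n : kˣ) : k) hne (hK1 μ')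
    have hdisj : Disjoint (Module.End.eigenspace E ((lam ^ n : kˣ) : k))
        (⨆ (c : k) (_ : c ≠ ((lam ^ n : kˣ) : k)), Module.End.eigenspace E c) :=
      Module.End.eigenspaces_iSupIndep E ((lam ^ n : kˣ) : k)
    have hWle : W ≤ Module.End.eigenspace E ((lam ^ n : kˣ) : k) := keyle lam hlamN
    have hSinf : S ⊓ Module.End.eigenspace E ((lam ^ n : kˣ) : k) = ⊥ :=
      le_bot_iff.mp (le_trans (inf_le_inf_right _ hSle) hdisj.symm.le_bot)
    calc W = W ⊔ ⊥ := (sup_bot_eq _).symm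
      _ = W ⊔ (S ⊓ Module.End.eigenspace E ((lam ^ n : kˣ) : k)) := by rw [hSinf]
      _ = (W ⊔ S) ⊓ Module.End.eigenspace E ((lam ^ n : kˣ) : k) :=
          (sup_inf_assoc_of_le S hWle).symm
      _ = Module.End.eigenspace E ((lam ^ n : kˣ) : k) := by rw [htop, top_inf_eq]
  -- claim 2
  have key2 : ∀ c : k, Module.End.eigenspace E c ≠ ⊥ →
      ∃ lam : kˣ, Module.End.eigenspace E c =
        ⨆ l : L, Module.End.eigenspace T ((lam * l : kˣ) : k) := by
    intro c hc
    have hex : ∃ μ' : kˣ, Module.End.eigenspace T ((μ' : kˣ) : k) ≠ ⊥ ∧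
        ((μ' ^ n : kˣ) : k) = c := by
      by_contra hne
      push_neg at hne
      have htople : (⊤ : Submodule k V) ≤
          ⨆ (c' : k) (_ : c' ≠ c), Module.End.eigenspace E c' := by
        rw [← hdiag]
        refine iSup_le fun μ => ?_
        by_cases hb : Module.End.eigenspace T μ = ⊥
        · rw [hb]; exact bot_le
        · obtain ⟨μ', rfl, _⟩ := eigen_unit γ N hNpos hNord hb
          exact le_iSup₂_of_le ((μ' ^ n : kˣ) : k) (hne μ' hb) (hK1 μ')
      have hdisj : Disjoint (Module.End.eigenspace E c)
          (⨆ (c' : k) (_ : c' ≠ c), Module.End.eigenspace E c') :=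
        Module.End.eigenspaces_iSupIndep E c
      refine hc ?_
      have hle : Module.End.eigenspace E c ≤ Module.End.eigenspace E c ⊓
          ⨆ (c' : k) (_ : c' ≠ c), Module.End.eigenspace E c' :=
        le_inf le_rfl (le_trans le_top htople)
      exact le_bot_iff.mp (hle.trans hdisj.le_bot)
    obtain ⟨μ', hneb, hval⟩ := hex
    exact ⟨μ', by rw [← hval]; exact (key1 μ' hneb).symm⟩
  -- coset invariance of the close eigenspaces
  have Wcoset : ∀ (lam : kˣ) (l₀ : L),
      (⨆ l : L, Module.End.eigenspace T (((lam * l₀) * l : kˣ) : k)) =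
        ⨆ l : L, Module.End.eigenspace T ((lam * l : kˣ) : k) := by
    intro lam l₀
    apply le_antisymm
    · refine iSup_le fun l => ?_
      have hu : (lam * l₀) * (l : kˣ) = lam * ((l₀ * l : L) : kˣ) := by
        push_cast
        group
      rw [hu]
      exact le_iSup (fun l : L => Module.End.eigenspace T ((lam * l : kˣ) : k)) (l₀ * l)
    · refine iSup_le fun l => ?_
      have hu : lam * (l : kˣ) = (lam * l₀) * ((l₀⁻¹ * l : L) : kˣ) := by
        push_cast
        group
      rw [hu]
      exact le_iSup (fun l : L =>
        Module.End.eigenspace T (((lam * l₀) * l : kˣ) : k)) (l₀⁻¹ * l)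
  refine ⟨key1, key2, ?_⟩
  -- claim 3
  intro g
  constructor
  · intro hpre
    have hker : ∀ μ : k, Module.End.eigenspace T μ ≤
        LinearMap.ker ((g : Module.End k V) * E - E * (g : Module.End k V)) := by
      intro μ
      by_cases hb : Module.End.eigenspace T μ = ⊥
      · rw [hb]; exact bot_le
      obtain ⟨μ', rfl, hN⟩ := eigen_unit γ N hNpos hNord hb
      intro v hv
      have hv1 : v ∈ ⨆ l : L, Module.End.eigenspace T ((μ' * l : kˣ) : k) := by
        have h1' : ((μ' * ((1 : L) : kˣ) : kˣ) : k) = ((μ' : kˣ) : k) := by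
          simp
        refine le_iSup (fun l : L =>
          Module.End.eigenspace T ((μ' * l : kˣ) : k)) (1 : L) ?_
        show v ∈ Module.End.eigenspace T ((μ' * ((1 : L) : kˣ) : kˣ) : k)
        rw [h1']
        exact hv
      have hgv : (g : Module.End k V) v ∈
          Module.End.eigenspace E ((μ' ^ n : kˣ) : k) := by
        rw [← key1 μ' hb]
        exact hpre μ' (Submodule.mem_map_of_mem hv1)
      have hEv : E v = ((μ' ^ n : kˣ) : k) • v :=
        zpow_smul γ μ' v (Module.End.mem_eigenspace_iff.mp hv) n
      have hEgv : E ((g : Module.End k V) v) =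
          ((μ' ^ n : kˣ) : k) • (g : Module.End k V) v :=
        Module.End.mem_eigenspace_iff.mp hgv
      rw [LinearMap.mem_ker, LinearMap.sub_apply, Module.End.mul_apply, Module.End.mul_apply,
        hEv, map_smul, hEgv, sub_self]
    have hker_top : LinearMap.ker ((g : Module.End k V) * E - E * (g : Module.End k V)) = ⊤ := by
      rw [eq_top_iff, ← hdiag]
      exact iSup_le hker
    have hEnd : (g : Module.End k V) * E = E * (g : Module.End k V) :=
      sub_eq_zero.mp (LinearMap.ker_eq_top.mp hker_top)
    exact Units.ext (by rw [Units.val_mul, Units.val_mul]; exact hEnd)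
  · intro hcom lam
    have hgE : (g : Module.End k V) * E = E * (g : Module.End k V) := by
      have := congrArg Units.val hcom
      rwa [Units.val_mul, Units.val_mul] at this
    have hmapsE : ∀ c : k, (Module.End.eigenspace E c).map (g : Module.End k V) ≤
        Module.End.eigenspace E c := by
      intro c
      rw [Submodule.map_le_iff_le_comap]
      intro v hv
      have hc : E ((g : Module.End k V) v) = c • (g : Module.End k V) v := by
        rw [← Module.End.mul_apply, ← hgE, Module.End.mul_apply,
          Module.End.mem_eigenspace_iff.mp hv, map_smul]
      exact Submodule.mem_comap.mpr (Module.End.mem_eigenspace_iff.mpr hc)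
    by_cases hex : ∃ l₀ : L, Module.End.eigenspace T ((lam * l₀ : kˣ) : k) ≠ ⊥
    · obtain ⟨l₀, h0⟩ := hex
      have heq : (⨆ l : L, Module.End.eigenspace T ((lam * l : kˣ) : k)) =
          Module.End.eigenspace E (((lam * l₀) ^ n : kˣ) : k) := by
        rw [← Wcoset lam l₀]
        exact key1 (lam * l₀) h0
      rw [heq]
      exact hmapsE _
    · push_neg at hex
      have hbot : (⨆ l : L, Module.End.eigenspace T ((lam * l : kˣ) : k)) = ⊥ :=
        iSup_eq_bot.mpr hex
      rw [hbot, Submodule.map_bot]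
end

section
/- Let V be a vector space over a field k, let γ and t be commuting diagonalisable linear endomorphisms of V, and let L be an additive subgroup of k. If every eigenvalue of t on V lies in L, then for every λ ∈ k the (additive) L-close λ-eigenspace of γ − t equals the L-close λ-eigenspace of γ, where the L-close λ-eigenspace of an endomorphism is the sum of its eigenspaces with eigenvalue in λ + L. In particular C_V^L(γ − t) = C_V^L(γ), where C_V^L(-) is the L-close 0-eigenspace. -/
open Module

/-- Components of a sum of eigenvectors lying in an invariant submodule lie in it too. -/
lemma aux_components {k V : Type*} [Field k] [AddCommGroup V] [Module k V]
    (t : Module.End k V) (p : Submodule k V) (hp : ∀ x ∈ p, t x ∈ p) :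
    ∀ (n : ℕ) (s : Finset k) (F : k → V), s.card = n →
      (∀ μ ∈ s, F μ ∈ Module.End.eigenspace t μ) →
      (∑ μ ∈ s, F μ) ∈ p → ∀ μ ∈ s, F μ ∈ p := by
  classical
  intro n
  induction n with
  | zero =>
    intro s F hcard _ _ μ hμ
    simp [Finset.card_eq_zero.mp hcard] at hμ
  | succ n ih =>
    intro s F hcard hF hsum μ hμ
    obtain ⟨μ₀, hμ₀⟩ : s.Nonempty := Finset.card_pos.mp (by omega)
    set G : k → V := fun ν => (ν - μ₀) • F ν with hG
    have hGsum : (∑ ν ∈ s.erase μ₀, G ν) ∈ p := by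
      have h1 : (∑ ν ∈ s.erase μ₀, G ν) = ∑ ν ∈ s, G ν := by
        rw [Finset.sum_erase]
        simp [hG]
      have h2 : (∑ ν ∈ s, G ν) = t (∑ ν ∈ s, F ν) - μ₀ • ∑ ν ∈ s, F ν := by
        rw [map_sum, Finset.smul_sum, ← Finset.sum_sub_distrib]
        refine Finset.sum_congr rfl fun ν hν => ?_
        have := Module.End.mem_eigenspace_iff.mp (hF ν hν)
        simp only [hG]
        rw [this, ← sub_smul]
      rw [h1, h2]
      exact Submodule.sub_mem p (hp _ hsum) (Submodule.smul_mem p _ hsum)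
    have hGe : ∀ ν ∈ s.erase μ₀, G ν ∈ Module.End.eigenspace t ν := fun ν hν =>
      Submodule.smul_mem _ _ (hF ν (Finset.mem_of_mem_erase hν))
    have hcard' : (s.erase μ₀).card = n := by
      rw [Finset.card_erase_of_mem hμ₀]; omega
    have hGp := ih (s.erase μ₀) G hcard' hGe hGsum
    have hFp : ∀ ν ∈ s.erase μ₀, F ν ∈ p := by
      intro ν hν
      have hne : ν - μ₀ ≠ 0 := sub_ne_zero.mpr (Finset.ne_of_mem_erase hν)
      have := Submodule.smul_mem p (ν - μ₀)⁻¹ (hGp ν hν)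
      rwa [hG, smul_smul, inv_mul_cancel₀ hne, one_smul] at this
    rcases eq_or_ne μ μ₀ with rfl | hne
    · have : F μ = (∑ ν ∈ s, F ν) - ∑ ν ∈ s.erase μ, F ν := by
        rw [← Finset.sum_erase_add s F hμ]; abel
      rw [this]
      exact Submodule.sub_mem p hsum (Submodule.sum_mem p hFp)
    · exact hFp μ (Finset.mem_erase.mpr ⟨hne, hμ⟩)

/-- An invariant submodule of a diagonalisable endomorphism decomposes. -/
lemma aux_decomp {k V : Type*} [Field k] [AddCommGroup V] [Module k V]
    (t : Module.End k V) (ht : ⨆ μ : k, Module.End.eigenspace t μ = ⊤)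
    (p : Submodule k V) (hp : ∀ x ∈ p, t x ∈ p) :
    p ≤ ⨆ μ : k, p ⊓ Module.End.eigenspace t μ := by
  intro v hv
  have : v ∈ ⨆ μ : k, Module.End.eigenspace t μ := ht ▸ Submodule.mem_top
  obtain ⟨f, hf, hfv⟩ := (Submodule.mem_iSup_iff_exists_finsupp _ _).mp this
  have hsum : (∑ μ ∈ f.support, f μ) = v := by rw [← hfv]; rfl
  have hcomp := aux_components t p hp f.support.card f.support f rfl
    (fun μ _ => hf μ) (hsum ▸ hv)
  rw [← hsum]
  exact Submodule.sum_mem _ fun μ hμ =>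
    Submodule.mem_iSup_of_mem μ ⟨hcomp μ hμ, hf μ⟩
lemma aux_key {k V : Type*} [Field k] [AddCommGroup V] [Module k V]
    (t S : Module.End k V) (hc : Commute S t)
    (ht : ⨆ μ : k, Module.End.eigenspace t μ = ⊤)
    (L : AddSubgroup k)
    (htL : ∀ μ : k, Module.End.eigenspace t μ ≠ ⊥ → μ ∈ L) (lam : k) :
    (⨆ l : L, Module.End.eigenspace S (lam + l)) ≤
      ⨆ l : L, Module.End.eigenspace (S + t) (lam + l) := by
  refine iSup_le fun l => ?_
  have hinv : ∀ x ∈ Module.End.eigenspace S (lam + l),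
      t x ∈ Module.End.eigenspace S (lam + l) := by
    intro x hx
    rw [Module.End.mem_eigenspace_iff] at hx ⊢
    calc S (t x) = (S * t) x := rfl
    _ = (t * S) x := by rw [hc.eq]
    _ = t (S x) := rfl
    _ = (lam + l) • t x := by rw [hx, map_smul]
  refine le_trans (aux_decomp t ht _ hinv) (iSup_le fun ν => ?_)
  by_cases hν : Module.End.eigenspace t ν = ⊥
  · simp [hν]
  · intro x hx
    obtain ⟨hx1, hx2⟩ := hx
    have hmem : x ∈ Module.End.eigenspace (S + t) (lam + ((l : k) + ν)) := by
      have h1 := Module.End.mem_eigenspace_iff.mp hx1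
      have h2 := Module.End.mem_eigenspace_iff.mp hx2
      rw [Module.End.mem_eigenspace_iff, LinearMap.add_apply, h1, h2, ← add_smul,
        add_assoc]
    exact Submodule.mem_iSup_of_mem ⟨(l : k) + ν, L.add_mem l.2 (htL ν hν)⟩ hmem

lemma aux_eig_neg {k V : Type*} [Field k] [AddCommGroup V] [Module k V]
    (t : Module.End k V) (μ : k) :
    Module.End.eigenspace (-t) μ = Module.End.eigenspace t (-μ) := by
  ext x
  rw [Module.End.mem_eigenspace_iff, Module.End.mem_eigenspace_iff]
  rw [LinearMap.neg_apply, neg_eq_iff_eq_neg, ← neg_smul]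

/-- Additive version: if `γ` and `t` are commuting diagonalisable endomorphisms
of `V`, `L` is an additive subgroup of `k`, and every eigenvalue of `t` lies in
`L`, then the `L`-close `λ`-eigenspaces of `γ − t` and of `γ` coincide. -/
theorem stmt10 {k V : Type*} [Field k] [AddCommGroup V] [Module k V]
    (γ t : Module.End k V)
    (hcomm : Commute γ t)
    (hγ : ⨆ μ : k, Module.End.eigenspace γ μ = ⊤)
    (ht : ⨆ μ : k, Module.End.eigenspace t μ = ⊤)
    (L : AddSubgroup k)
    (htL : ∀ μ : k, Module.End.eigenspace t μ ≠ ⊥ → μ ∈ L) :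
    ∀ lam : k,
      (⨆ l : L, Module.End.eigenspace (γ - t) (lam + l)) =
      ⨆ l : L, Module.End.eigenspace γ (lam + l) := by
  intro lam
  apply le_antisymm
  · have hc : Commute (γ - t) t := (hcomm).sub_left (Commute.refl t)
    have := aux_key t (γ - t) hc ht L htL lam
    rwa [sub_add_cancel] at this
  · have htneg : ⨆ μ : k, Module.End.eigenspace (-t) μ = ⊤ := by
      rw [← ht]
      simp_rw [aux_eig_neg]
      exact (Equiv.neg k).iSup_comp
    have htLneg : ∀ μ : k, Module.End.eigenspace (-t) μ ≠ ⊥ → μ ∈ L := by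
      intro μ hμ
      rw [aux_eig_neg] at hμ
      simpa using L.neg_mem (htL _ hμ)
    have := aux_key (-t) γ hcomm.neg_right htneg L htLneg lam
    rwa [← sub_eq_add_neg] at this
end

section
/- Let V and W be vector spaces over a field k, γ ∈ GL(V) and δ ∈ GL(W) diagonalisable automorphisms, and L a subgroup of k^×. Then γ ⊗ δ is a diagonalisable automorphism of V ⊗ W, and for every ν ∈ k^×, the L-close ν-eigenspace of γ ⊗ δ in V ⊗ W equals the sum, over pairs (λ, μ) of eigenvalues of γ and δ with λμ ∈ νL, of V_λ ⊗ W_μ, where V_λ and W_μ are the corresponding eigenspaces. In particular, the subgroup of GL(V) × GL(W) acting by elements preserving each L-close eigenspace of γ in V and each L-close eigenspace of δ in W preserves every L-close eigenspace of γ ⊗ δ in V ⊗ W. -/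
open TensorProduct

section stmt16aux

variable {k V W : Type*} [Field k] [AddCommGroup V] [Module k V]
  [AddCommGroup W] [Module k W]

lemma stmt16_tmul_mem (γ : Module.End k V) (δ : Module.End k W) {a b : k} {v : V} {w : W}
    (hv : v ∈ γ.eigenspace a) (hw : w ∈ δ.eigenspace b) :
    v ⊗ₜ[k] w ∈ Module.End.eigenspace (TensorProduct.map γ δ) (a * b) := by
  rw [Module.End.mem_eigenspace_iff] at hv hw ⊢
  simp [hv, hw, TensorProduct.smul_tmul', smul_smul, mul_comm]

lemma stmt16_tmul_induct {ι κ : Sort*} (E : ι → Submodule k V) (F : κ → Submodule k W)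
    (S : Submodule k (V ⊗[k] W))
    (h : ∀ i j, ∀ v ∈ E i, ∀ w ∈ F j, v ⊗ₜ[k] w ∈ S) :
    ∀ v ∈ ⨆ i, E i, ∀ w ∈ ⨆ j, F j, v ⊗ₜ[k] w ∈ S := by
  intro v hv w hw
  refine Submodule.iSup_induction (motive := fun v => v ⊗ₜ[k] w ∈ S) E hv ?_ ?_ ?_
  · intro i v hvi
    refine Submodule.iSup_induction (motive := fun w => v ⊗ₜ[k] w ∈ S) F hw ?_ ?_ ?_
    · intro j w hwj; exact h i j v hvi w hwj
    · show v ⊗ₜ[k] (0 : W) ∈ S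
      rw [TensorProduct.tmul_zero]; exact S.zero_mem
    · intro x y hx hy
      show v ⊗ₜ[k] (x + y) ∈ S
      rw [TensorProduct.tmul_add]; exact S.add_mem hx hy
  · show (0 : V) ⊗ₜ[k] w ∈ S
    rw [TensorProduct.zero_tmul]; exact S.zero_mem
  · intro x y hx hy
    show (x + y) ⊗ₜ[k] w ∈ S
    rw [TensorProduct.add_tmul]; exact S.add_mem hx hy

lemma stmt16_range_le (p : Submodule k V) (q : Submodule k W) (S : Submodule k (V ⊗[k] W))
    (h : ∀ v ∈ p, ∀ w ∈ q, v ⊗ₜ[k] w ∈ S) :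
    LinearMap.range (TensorProduct.map p.subtype q.subtype) ≤ S := by
  rw [TensorProduct.range_map_eq_span_tmul, Submodule.span_le]
  rintro _ ⟨v, w, rfl⟩
  exact h v v.2 w w.2

lemma stmt16_mem_range {p : Submodule k V} {q : Submodule k W} {v : V} {w : W}
    (hv : v ∈ p) (hw : w ∈ q) :
    v ⊗ₜ[k] w ∈ LinearMap.range (TensorProduct.map p.subtype q.subtype) :=
  ⟨(⟨v, hv⟩ : p) ⊗ₜ[k] (⟨w, hw⟩ : q), rfl⟩

end stmt16aux

/-- For diagonalisable automorphisms `γ` of `V` and `δ` of `W`, `γ ⊗ δ` is a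
diagonalisable automorphism of `V ⊗ W`, whose `L`-close `ν`-eigenspace is the
sum over pairs of eigenvalues `(λ, μ)` with `λμ ∈ νL` of `V_λ ⊗ W_μ`; in
particular, automorphisms preserving all `L`-close eigenspaces of `γ` and of
`δ` induce one preserving all `L`-close eigenspaces of `γ ⊗ δ`. -/
theorem stmt16 {k V W : Type*} [Field k] [AddCommGroup V] [Module k V]
    [AddCommGroup W] [Module k W]
    (γ : Module.End k V) (δ : Module.End k W)
    (hγu : IsUnit γ) (hδu : IsUnit δ)
    (hγ : ⨆ μ : k, Module.End.eigenspace γ μ = ⊤)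
    (hδ : ⨆ μ : k, Module.End.eigenspace δ μ = ⊤)
    (L : Subgroup kˣ) :
    IsUnit (TensorProduct.map γ δ) ∧
    (⨆ μ : k, Module.End.eigenspace (TensorProduct.map γ δ) μ = ⊤) ∧
    (∀ ν : kˣ,
      (⨆ l : L, Module.End.eigenspace (TensorProduct.map γ δ) ((ν * l : kˣ) : k)) =
      ⨆ p : kˣ × kˣ,
        ⨆ _ : Module.End.eigenspace γ ((p.1 : kˣ) : k) ≠ ⊥ ∧
          Module.End.eigenspace δ ((p.2 : kˣ) : k) ≠ ⊥ ∧ ν⁻¹ * (p.1 * p.2) ∈ L,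
        LinearMap.range (TensorProduct.map
          (Module.End.eigenspace γ ((p.1 : kˣ) : k)).subtype
          (Module.End.eigenspace δ ((p.2 : kˣ) : k)).subtype)) ∧
    (∀ g : Module.End k V, ∀ h : Module.End k W, IsUnit g → IsUnit h →
      (∀ lam : kˣ,
        (⨆ l : L, Module.End.eigenspace γ ((lam * l : kˣ) : k)).map g ≤
          ⨆ l : L, Module.End.eigenspace γ ((lam * l : kˣ) : k)) →
      (∀ mu : kˣ,
        (⨆ l : L, Module.End.eigenspace δ ((mu * l : kˣ) : k)).map h ≤
          ⨆ l : L, Module.End.eigenspace δ ((mu * l : kˣ) : k)) →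
      ∀ ν : kˣ,
        (⨆ l : L, Module.End.eigenspace (TensorProduct.map γ δ)
            ((ν * l : kˣ) : k)).map (TensorProduct.map g h) ≤
          ⨆ l : L, Module.End.eigenspace (TensorProduct.map γ δ) ((ν * l : kˣ) : k)) := by
  -- Part 1 : `map γ δ` is a unit
  have e1 : γ * (↑hγu.unit⁻¹ : Module.End k V) = 1 := hγu.mul_val_inv
  have e1' : (↑hγu.unit⁻¹ : Module.End k V) * γ = 1 := hγu.val_inv_mul
  have e2 : δ * (↑hδu.unit⁻¹ : Module.End k W) = 1 := hδu.mul_val_inv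
  have e2' : (↑hδu.unit⁻¹ : Module.End k W) * δ = 1 := hδu.val_inv_mul
  have hmapmul : ∀ (f f' : Module.End k V) (g g' : Module.End k W),
      TensorProduct.map f g * TensorProduct.map f' g' = TensorProduct.map (f * f') (g * g') := by
    intro f f' g g'
    rw [Module.End.mul_eq_comp, Module.End.mul_eq_comp, Module.End.mul_eq_comp,
      ← TensorProduct.map_comp]
  have hunit : IsUnit (TensorProduct.map γ δ) := by
    refine ⟨⟨TensorProduct.map γ δ,
      TensorProduct.map (↑hγu.unit⁻¹) (↑hδu.unit⁻¹), ?_, ?_⟩, rfl⟩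
    · rw [hmapmul, e1, e2]; simp only [Module.End.one_eq_id, TensorProduct.map_id]
    · rw [hmapmul, e1', e2']; simp only [Module.End.one_eq_id, TensorProduct.map_id]
  -- injectivity of γ and δ
  have hγinj : Function.Injective γ := by
    intro x y hxy
    have : (↑hγu.unit⁻¹ : Module.End k V) (γ x) = (↑hγu.unit⁻¹ : Module.End k V) (γ y) := by
      rw [hxy]
    simpa [← Module.End.mul_apply, e1'] using this
  have hδinj : Function.Injective δ := by
    intro x y hxy
    have : (↑hδu.unit⁻¹ : Module.End k W) (δ x) = (↑hδu.unit⁻¹ : Module.End k W) (δ y) := by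
      rw [hxy]
    simpa [← Module.End.mul_apply, e2'] using this
  -- Part 2 : diagonalisability
  have htop : ⨆ μ : k, Module.End.eigenspace (TensorProduct.map γ δ) μ = ⊤ := by
    rw [eq_top_iff, ← TensorProduct.span_tmul_eq_top k V W, Submodule.span_le]
    rintro _ ⟨v, w, rfl⟩
    refine stmt16_tmul_induct γ.eigenspace δ.eigenspace _ ?_ v ?_ w ?_
    · intro a b v hv w hw
      exact Submodule.mem_iSup_of_mem (a * b) (stmt16_tmul_mem γ δ hv hw)
    · rw [hγ]; trivial
    · rw [hδ]; trivial
  -- the pairwise tensor decomposition of each eigenspace of `map γ δ`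
  set T : kˣ → Submodule k (V ⊗[k] W) := fun η =>
    ⨆ p : kˣ × kˣ, ⨆ _ : p.1 * p.2 = η,
      LinearMap.range (TensorProduct.map
        (Module.End.eigenspace γ ((p.1 : kˣ) : k)).subtype
        (Module.End.eigenspace δ ((p.2 : kˣ) : k)).subtype) with hT
  have hTle : ∀ η : kˣ, T η ≤ Module.End.eigenspace (TensorProduct.map γ δ) (η : k) := by
    intro η
    simp only [hT]
    refine iSup_le fun p => iSup_le fun hp => stmt16_range_le _ _ _ fun v hv w hw => ?_
    have := stmt16_tmul_mem γ δ hv hw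
    rwa [show ((p.1 : k) * (p.2 : k)) = (η : k) by rw [← Units.val_mul, hp]] at this
  have hTtop : ⨆ η : kˣ, T η = ⊤ := by
    rw [eq_top_iff, ← TensorProduct.span_tmul_eq_top k V W, Submodule.span_le]
    rintro _ ⟨v, w, rfl⟩
    refine stmt16_tmul_induct γ.eigenspace δ.eigenspace _ ?_ v ?_ w ?_
    · intro a b v hv w hw
      by_cases hv0 : v = 0
      · subst hv0; rw [TensorProduct.zero_tmul]; exact Submodule.zero_mem _
      by_cases hw0 : w = 0
      · subst hw0; rw [TensorProduct.tmul_zero]; exact Submodule.zero_mem _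
      have ha : a ≠ 0 := by
        rintro rfl
        rw [Module.End.eigenspace_zero, LinearMap.mem_ker] at hv
        exact hv0 (hγinj (by simpa using hv))
      have hb : b ≠ 0 := by
        rintro rfl
        rw [Module.End.eigenspace_zero, LinearMap.mem_ker] at hw
        exact hw0 (hδinj (by simpa using hw))
      refine Submodule.mem_iSup_of_mem (Units.mk0 a ha * Units.mk0 b hb) ?_
      simp only [hT]
      refine Submodule.mem_iSup_of_mem (Units.mk0 a ha, Units.mk0 b hb) ?_
      refine Submodule.mem_iSup_of_mem rfl ?_
      exact stmt16_mem_range hv hw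
    · rw [hγ]; trivial
    · rw [hδ]; trivial
  have key : ∀ η : kˣ, Module.End.eigenspace (TensorProduct.map γ δ) (η : k) = T η := by
    intro η
    refine le_antisymm ?_ (hTle η)
    intro x hx
    have hx' : x ∈ T η ⊔ ⨆ (η' : kˣ) (_ : η' ≠ η), T η' := by
      have hle : (⊤ : Submodule k (V ⊗[k] W)) ≤ T η ⊔ ⨆ (η' : kˣ) (_ : η' ≠ η), T η' := by
        rw [← hTtop]
        refine iSup_le fun η' => ?_
        by_cases hη : η' = η
        · subst hη; exact le_sup_left
        · exact le_sup_of_le_right (le_iSup₂_of_le η' hη le_rfl)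
      exact hle trivial
    obtain ⟨y, hy, z, hz, rfl⟩ := Submodule.mem_sup.1 hx'
    have hz1 : z ∈ Module.End.eigenspace (TensorProduct.map γ δ) (η : k) := by
      have := Submodule.sub_mem _ hx (hTle η hy)
      simpa using this
    have hle2 : (⨆ (η' : kˣ) (_ : η' ≠ η), T η') ≤ ⨆ (μ : k) (_ : μ ≠ (η : k)),
        Module.End.eigenspace (TensorProduct.map γ δ) μ := by
      refine iSup_le fun η' => iSup_le fun hne => ?_
      exact le_iSup₂_of_le ((η' : kˣ) : k) (fun hh => hne (Units.ext hh)) (hTle η')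
    have hz2 := hle2 hz
    have hz0 : z = 0 :=
      Submodule.disjoint_def.mp
        (Module.End.eigenspaces_iSupIndep (TensorProduct.map γ δ) (η : k)) z hz1 hz2
    rw [hz0, add_zero]
    exact hy
  -- Part 3
  have part3 : ∀ ν : kˣ,
      (⨆ l : L, Module.End.eigenspace (TensorProduct.map γ δ) ((ν * l : kˣ) : k)) =
      ⨆ p : kˣ × kˣ,
        ⨆ _ : Module.End.eigenspace γ ((p.1 : kˣ) : k) ≠ ⊥ ∧
          Module.End.eigenspace δ ((p.2 : kˣ) : k) ≠ ⊥ ∧ ν⁻¹ * (p.1 * p.2) ∈ L,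
        LinearMap.range (TensorProduct.map
          (Module.End.eigenspace γ ((p.1 : kˣ) : k)).subtype
          (Module.End.eigenspace δ ((p.2 : kˣ) : k)).subtype) := by
    intro ν
    refine le_antisymm ?_ ?_
    · refine iSup_le fun l => ?_
      rw [key (ν * (l : kˣ))]
      simp only [hT]
      refine iSup_le fun p => iSup_le fun hp => ?_
      by_cases h1 : Module.End.eigenspace γ ((p.1 : kˣ) : k) = ⊥
      · refine stmt16_range_le _ _ _ fun v hv w hw => ?_
        rw [h1, Submodule.mem_bot] at hv
        subst hv
        rw [TensorProduct.zero_tmul]; exact Submodule.zero_mem _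
      by_cases h2 : Module.End.eigenspace δ ((p.2 : kˣ) : k) = ⊥
      · refine stmt16_range_le _ _ _ fun v hv w hw => ?_
        rw [h2, Submodule.mem_bot] at hw
        subst hw
        rw [TensorProduct.tmul_zero]; exact Submodule.zero_mem _
      have h3 : ν⁻¹ * (p.1 * p.2) ∈ L := by
        rw [hp, inv_mul_cancel_left]
        exact l.2
      exact le_iSup₂_of_le p ⟨h1, h2, h3⟩ le_rfl
    · refine iSup_le fun p => iSup_le fun hp => ?_
      obtain ⟨h1, h2, h3⟩ := hp
      refine le_iSup_of_le ⟨ν⁻¹ * (p.1 * p.2), h3⟩ ?_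
      have hval : ((ν * (⟨ν⁻¹ * (p.1 * p.2), h3⟩ : L) : kˣ) : k) = (p.1 : k) * (p.2 : k) := by
        have : (ν * (ν⁻¹ * (p.1 * p.2)) : kˣ) = p.1 * p.2 := by
          rw [mul_inv_cancel_left]
        rw [show ((⟨ν⁻¹ * (p.1 * p.2), h3⟩ : L) : kˣ) = ν⁻¹ * (p.1 * p.2) from rfl, this,
          Units.val_mul]
      rw [hval]
      exact stmt16_range_le _ _ _ fun v hv w hw => stmt16_tmul_mem γ δ hv hw
  refine ⟨hunit, htop, part3, ?_⟩
  -- Part 4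
  intro g h hgu hhu hg hh ν
  rw [Submodule.map_iSup]
  refine iSup_le fun l => ?_
  rw [key (ν * (l : kˣ)), hT]
  simp only [Submodule.map_iSup]
  refine iSup_le fun p => iSup_le fun hp => ?_
  rw [← LinearMap.range_comp, ← TensorProduct.map_comp]
  rw [TensorProduct.range_map_eq_span_tmul, Submodule.span_le]
  rintro _ ⟨v, w, rfl⟩
  simp only [LinearMap.comp_apply, Submodule.coe_subtype, SetLike.mem_coe]
  have hv1 : (v : V) ∈ ⨆ l : L, Module.End.eigenspace γ ((p.1 * l : kˣ) : k) :=
    Submodule.mem_iSup_of_mem ⟨1, L.one_mem⟩ (by simpa using v.2)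
  have hw1 : (w : W) ∈ ⨆ l : L, Module.End.eigenspace δ ((p.2 * l : kˣ) : k) :=
    Submodule.mem_iSup_of_mem ⟨1, L.one_mem⟩ (by simpa using w.2)
  have hgv : g (v : V) ∈ ⨆ l : L, Module.End.eigenspace γ ((p.1 * l : kˣ) : k) :=
    hg p.1 ⟨_, hv1, rfl⟩
  have hhw : h (w : W) ∈ ⨆ l : L, Module.End.eigenspace δ ((p.2 * l : kˣ) : k) :=
    hh p.2 ⟨_, hw1, rfl⟩
  refine stmt16_tmul_induct (fun l : L => Module.End.eigenspace γ ((p.1 * l : kˣ) : k))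
    (fun l' : L => Module.End.eigenspace δ ((p.2 * l' : kˣ) : k)) _ ?_ _ hgv _ hhw
  intro l1 l2 a ha b hb
  have hmem := stmt16_tmul_mem γ δ ha hb
  have hval2 : ((p.1 * (l1 : kˣ) : kˣ) : k) * ((p.2 * (l2 : kˣ) : kˣ) : k)
      = ((ν * ((l : kˣ) * ((l1 : kˣ) * (l2 : kˣ))) : kˣ) : k) := by
    rw [← Units.val_mul]
    congr 1
    rw [mul_mul_mul_comm, hp, mul_assoc]
  rw [hval2] at hmem
  exact Submodule.mem_iSup_of_mem
    ⟨(l : kˣ) * ((l1 : kˣ) * (l2 : kˣ)), L.mul_mem l.2 (L.mul_mem l1.2 l2.2)⟩ hmem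
end
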